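/- arXiv:2009.10629 — 7 statements merged into one kernel-verified Lean document; each statement's English description precedes it below -/
import Mathlib

section
/- Let (α_k)_{k≥1} be a sequence of positive real numbers with α_1 ≤ 1 and α_{k+1} ≤ 2/(1 + √(1 + 4/α_k²)) for all k ≥ 1. Then α_k ≤ 2/(k+1) for all k ≥ 1. -/
open Real

lemma two_div_one_add_sqrt_le {a c : ℝ} (ha : 0 < a) (hc : 0 < c) (h : a ≤ 2 / c) :
    2 / (1 + √(1 + 4 / a ^ 2)) ≤ 2 / (c + 1) := by
  have hc_le : c ≤ 2 / a := (le_div_comm₀ ha hc).mp h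
  have hsq : c ^ 2 ≤ 4 / a ^ 2 := by
    calc c ^ 2 ≤ (2 / a) ^ 2 := pow_le_pow_left₀ hc.le hc_le 2
      _ = 4 / a ^ 2 := by ring
  have hsqrt : c ≤ √(1 + 4 / a ^ 2) :=
    Real.le_sqrt_of_sq_le (by linarith)
  exact div_le_div_of_nonneg_left zero_le_two (by positivity) (by linarith)

theorem stmt_0 (α : ℕ → ℝ)
    (hpos : ∀ k ≥ 1, 0 < α k)
    (h1 : α 1 ≤ 1)
    (hrec : ∀ k ≥ 1, α (k + 1) ≤ 2 / (1 + Real.sqrt (1 + 4 / (α k) ^ 2))) :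
    ∀ k ≥ 1, α k ≤ 2 / ((k : ℝ) + 1) := by
  intro k hk
  induction k, hk using Nat.le_induction with
  | base => norm_num [h1]
  | succ n hn ih =>
    calc α (n + 1) ≤ 2 / (1 + √(1 + 4 / α n ^ 2)) := hrec n hn
      _ ≤ 2 / ((n : ℝ) + 1 + 1) := two_div_one_add_sqrt_le (hpos n hn) (by positivity) ih
      _ = 2 / ((↑(n + 1) : ℝ) + 1) := by push_cast; ring
end

section
/- Define the damping sequence (α_k)_{k≥1} of real numbers by α_1 = 1 and α_{k+1} = 2/(1 + √(1 + 4/α_k²)) for all k ≥ 1. Let a > 0 and 0 < b < 1 be real numbers satisfying (1) a·2^{−b} > √5 − 2 and (2) a(1−b)·2^{2−b} − ab(1−b)·2^{−b} − 1 ≥ 0. Then for all k ≥ 1, 2/((1 + a·k^{−b})k + 1) < α_k ≤ 2/(k + 1). -/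
/-!
In terms of `s k = 2 / α k` the recursion reads `s (k + 1) = 1 + √(1 + s k ^ 2)`, which is
monotone in `s k`, so both bounds on `s k` propagate by induction as soon as the bounding
sequences obey the corresponding inequality. For `s k ≥ k + 1` this is `√(1 + (k + 1)²) ≥ k + 1`.
With `T x = x + a x^(1-b)`, the bound `s k < T k + 1` needs `1 + (T k + 1)² ≤ T (k + 1)²`; by
concavity of `x ↦ x^(1-b)` the increment `T (k + 1) - T k - 1` is at least `a (1-b) (k+1)^(-b)`,
and the condition on `a, b` makes this large enough.
-/

open Real

lemma mul_rpow_sub_one_le_rpow_sub_rpow {p u : ℝ} (hp0 : 0 ≤ p) (hp1 : p ≤ 1) (hu : 1 ≤ u) :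
    p * u ^ (p - 1) ≤ u ^ p - (u - 1) ^ p := by
  have hu0 : 0 < u := by linarith
  have hbern : (1 + -u⁻¹) ^ p ≤ 1 + p * -u⁻¹ :=
    rpow_one_add_le_one_add_mul_self (by linarith [inv_le_one_of_one_le₀ hu]) hp0 hp1
  have hfactor : (u - 1) ^ p = (1 + -u⁻¹) ^ p * u ^ p := by
    rw [← mul_rpow (by linarith [inv_le_one_of_one_le₀ hu]) hu0.le]
    congr 1
    field_simp
    ring
  have hpow : u ^ p = u ^ (p - 1) * u := by
    rw [← rpow_add_one hu0.ne', sub_add_cancel]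
  calc p * u ^ (p - 1) = u ^ p - (1 + p * -u⁻¹) * u ^ p := by
        rw [hpow]; field_simp; ring
    _ ≤ u ^ p - (u - 1) ^ p := by
        rw [hfactor]; gcongr

lemma one_add_sq_le_sq_succ {a b x : ℝ} (ha : 0 ≤ a) (hb0 : 0 ≤ b) (hb1 : b ≤ 1)
    (hab : 1 ≤ a * (1 - b) * 2 ^ (2 - b)) (hx : 1 ≤ x) :
    1 + ((1 + a * x ^ (-b)) * x + 1) ^ 2 ≤ ((1 + a * (x + 1) ^ (-b)) * (x + 1)) ^ 2 := by
  have hx0 : 0 < x := by linarith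
  have h2u : (2 : ℝ) ≤ x + 1 := by linarith
  have hrpow_mul {y : ℝ} (hy : 0 < y) : y ^ (-b) * y = y ^ (1 - b) := by
    rw [← rpow_add_one hy.ne']; ring_nf
  set p := a * x ^ (1 - b) with hp
  set q := a * (x + 1) ^ (1 - b) with hq
  have hgap : a * ((1 - b) * (x + 1) ^ (-b)) ≤ q - p := by
    have := mul_rpow_sub_one_le_rpow_sub_rpow (p := 1 - b) (u := x + 1)
      (by linarith) (by linarith) (by linarith)
    rw [show 1 - b - 1 = -b by ring, add_sub_cancel_right] at this
    rw [hp, hq, ← mul_sub]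
    exact mul_le_mul_of_nonneg_left this ha
  have h2 : (2 : ℝ) ^ (2 - b) = 2 * 2 ^ (1 - b) := by
    rw [show (2 : ℝ) - b = 1 - b + 1 by ring, rpow_add_one two_ne_zero]; ring
  have hgap2u : 1 ≤ (q - p) * (2 * (x + 1)) := by
    calc 1 ≤ 2 * (a * (1 - b)) * 2 ^ (1 - b) := by rw [h2] at hab; linarith
      _ ≤ 2 * (a * (1 - b)) * (x + 1) ^ (1 - b) := by gcongr
      _ = a * ((1 - b) * (x + 1) ^ (-b)) * (2 * (x + 1)) := by
        rw [← hrpow_mul (by linarith)]; ring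
      _ ≤ (q - p) * (2 * (x + 1)) := by gcongr
  have hp0 : 0 ≤ p := by positivity
  have hqp : 0 ≤ q - p := le_trans (by positivity) hgap
  have hlhs : (1 + a * x ^ (-b)) * x + 1 = x + 1 + p := by
    rw [hp, ← hrpow_mul hx0]; ring
  have hrhs : (1 + a * (x + 1) ^ (-b)) * (x + 1) = x + 1 + q := by
    rw [hq, ← hrpow_mul (by linarith)]; ring
  rw [hlhs, hrhs]
  nlinarith [mul_nonneg hqp (by linarith : 0 ≤ p + q)]

section Damping

variable {α : ℕ → ℝ} (hrec : ∀ k ≥ 1, α (k + 1) = 2 / (1 + √(1 + 4 / α k ^ 2)))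
include hrec

lemma two_div_succ_eq {k : ℕ} (hk : 1 ≤ k) : 2 / α (k + 1) = 1 + √(1 + (2 / α k) ^ 2) := by
  rw [hrec k hk, div_div_cancel₀ (by positivity), div_pow]
  norm_num

lemma two_div_bounds (h1 : α 1 = 1) {a b : ℝ} (ha : 0 < a) (hb0 : 0 ≤ b) (hb1 : b ≤ 1)
    (hab : 1 ≤ a * (1 - b) * 2 ^ (2 - b)) :
    ∀ k : ℕ, 1 ≤ k → (k : ℝ) + 1 ≤ 2 / α k ∧ 2 / α k < (1 + a * (k : ℝ) ^ (-b)) * k + 1 := by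
  intro k hk
  induction k, hk using Nat.le_induction with
  | base => norm_num [h1]; linarith
  | succ k hk ih =>
    obtain ⟨hlow, hupp⟩ := ih
    have hk1 : (1 : ℝ) ≤ k := by exact_mod_cast hk
    have hs0 : 0 ≤ 2 / α k := by linarith
    rw [two_div_succ_eq hrec hk]
    push_cast
    constructor
    · have : (k : ℝ) + 1 ≤ √(1 + (2 / α k) ^ 2) :=
        (le_sqrt (by linarith) (by positivity)).2 (by nlinarith)
      linarith
    · have hT : 0 < (1 + a * ((k : ℝ) + 1) ^ (-b)) * (k + 1) := by positivity
      have : √(1 + (2 / α k) ^ 2) < (1 + a * ((k : ℝ) + 1) ^ (-b)) * (k + 1) :=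
        (sqrt_lt' hT).2 (by nlinarith [one_add_sq_le_sq_succ ha.le hb0 hb1 hab hk1])
      linarith

end Damping

theorem stmt_1_general (α : ℕ → ℝ)
    (h1 : α 1 = 1)
    (hrec : ∀ k ≥ 1, α (k + 1) = 2 / (1 + Real.sqrt (1 + 4 / (α k) ^ 2)))
    (a b : ℝ) (ha : 0 < a) (hb0 : 0 < b) (hb1 : b < 1)
    (hcond2 : a * (1 - b) * (2 : ℝ) ^ (2 - b) - a * b * (1 - b) * (2 : ℝ) ^ (-b) - 1 ≥ 0) :
    ∀ k : ℕ, k ≥ 1 → 2 / ((1 + a * (k : ℝ) ^ (-b)) * (k : ℝ) + 1) < α k ∧ α k ≤ 2 / ((k : ℝ) + 1) := by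
  intro k hk
  have hab : 1 ≤ a * (1 - b) * 2 ^ (2 - b) := by
    have : 0 ≤ a * b * (1 - b) * (2 : ℝ) ^ (-b) := by
      have : 0 < 1 - b := by linarith
      positivity
    linarith
  obtain ⟨hlow, hupp⟩ := two_div_bounds hrec h1 ha hb0.le hb1.le hab k hk
  have hs : 0 < 2 / α k := by linarith
  rw [← div_div_cancel₀ (b := α k) two_ne_zero]
  exact ⟨div_lt_div_of_pos_left two_pos hs hupp,
    div_le_div_of_nonneg_left zero_le_two (by positivity) hlow⟩

theorem stmt_1 (α : ℕ → ℝ)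
    (h1 : α 1 = 1)
    (hrec : ∀ k ≥ 1, α (k + 1) = 2 / (1 + Real.sqrt (1 + 4 / (α k) ^ 2)))
    (a b : ℝ) (ha : 0 < a) (hb0 : 0 < b) (hb1 : b < 1)
    (hcond1 : a * (2 : ℝ) ^ (-b) > Real.sqrt 5 - 2)
    (hcond2 : a * (1 - b) * (2 : ℝ) ^ (2 - b) - a * b * (1 - b) * (2 : ℝ) ^ (-b) - 1 ≥ 0) :
    ∀ k : ℕ, k ≥ 1 → 2 / ((1 + a * (k : ℝ) ^ (-b)) * (k : ℝ) + 1) < α k ∧ α k ≤ 2 / ((k : ℝ) + 1) :=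
  stmt_1_general α h1 hrec a b ha hb0 hb1 hcond2
end

section
/- Define the damping sequence (α_k)_{k≥1} of real numbers by α_1 = 1 and α_{k+1} = 2/(1 + √(1 + 4/α_k²)) for all k ≥ 1. Then for all k ≥ 1, 2/((1 + k^{−1/2})k + 1) < α_k ≤ 2/(k + 1). -/
/-!
With `β k = 2 / α k` the recursion becomes `β (k + 1) = 1 + √(1 + β k ^ 2)` with `β 1 = 2`, and the
claim becomes `k + 1 ≤ β k < k + √k + 1`. Both bounds propagate by induction because the map
`b ↦ 1 + √(1 + b ^ 2)` is increasing on `[0, ∞)`: it sends `k + 1` above `k + 2` since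
`√(1 + b ^ 2) ≥ b`, and it sends `k + √k + 1` below `(k + 1) + √(k + 1) + 1`, which after squaring
reduces to `(k + 1) √k ≤ (k + 1) √(k + 1)`.
-/

namespace DampingSequence

open Real

noncomputable def step (b : ℝ) : ℝ := 1 + √(1 + b ^ 2)

lemma step_strictMonoOn : StrictMonoOn step (Set.Ici 0) := by
  intro a ha b _ hab
  have : a ^ 2 < b ^ 2 := pow_lt_pow_left₀ hab ha two_ne_zero
  unfold step
  gcongr

lemma add_one_le_step (b : ℝ) : b + 1 ≤ step b := by
  have : b ≤ √(1 + b ^ 2) :=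
    (le_abs_self b).trans ((sqrt_sq_eq_abs b).symm.le.trans (sqrt_le_sqrt (by linarith)))
  unfold step
  linarith

lemma step_add_sqrt_add_one_le {x : ℝ} (hx : 0 ≤ x) :
    step (x + √x + 1) ≤ (x + 1) + √(x + 1) + 1 := by
  have hs : √x ^ 2 = x := sq_sqrt hx
  have ht : √(x + 1) ^ 2 = x + 1 := sq_sqrt (by linarith)
  have hst : √x ≤ √(x + 1) := sqrt_le_sqrt (by linarith)
  suffices √(1 + (x + √x + 1) ^ 2) ≤ x + 1 + √(x + 1) by unfold step; linarith
  rw [sqrt_le_left (by positivity)]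
  nlinarith [mul_le_mul_of_nonneg_left hst (by linarith : (0 : ℝ) ≤ x + 1)]

lemma bounds_of_step (β : ℕ → ℝ) (h1 : β 1 = 2) (hrec : ∀ k ≥ 1, β (k + 1) = step (β k)) :
    ∀ k : ℕ, 1 ≤ k → (k : ℝ) + 1 ≤ β k ∧ β k < k + √k + 1 := by
  intro k hk
  induction k, hk using Nat.le_induction with
  | base => norm_num [h1]
  | succ k hk ih =>
    obtain ⟨hlow, hup⟩ := ih
    have hk0 : (0 : ℝ) ≤ k := k.cast_nonneg
    have hβ0 : 0 ≤ β k := by linarith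
    rw [hrec k hk]
    push_cast
    constructor
    · calc (k : ℝ) + 1 + 1 ≤ step (k + 1) := add_one_le_step _
        _ ≤ step (β k) := step_strictMonoOn.monotoneOn (Set.mem_Ici.2 (by linarith)) hβ0 hlow
    · calc step (β k) < step (k + √k + 1) :=
            step_strictMonoOn hβ0 (Set.mem_Ici.2 (by positivity)) hup
        _ ≤ (k + 1) + √(k + 1) + 1 := step_add_sqrt_add_one_le hk0

-- No sign condition on `a`: at `a = 0` both sides are `2`, since `x / 0 = 0`.
lemma two_div_succ_eq_step (a : ℝ) : 2 / (2 / (1 + √(1 + 4 / a ^ 2))) = step (2 / a) := by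
  rw [div_div_cancel₀ two_ne_zero, step, div_pow]
  norm_num

lemma one_add_rpow_neg_half_mul_add_one {x : ℝ} (hx : 0 < x) :
    (1 + x ^ (-(1 : ℝ) / 2)) * x + 1 = x + √x + 1 := by
  rw [add_mul, one_mul, ← rpow_add_one hx.ne', sqrt_eq_rpow]
  norm_num

end DampingSequence

open DampingSequence in
theorem stmt_2 (α : ℕ → ℝ)
    (h1 : α 1 = 1)
    (hrec : ∀ k ≥ 1, α (k + 1) = 2 / (1 + Real.sqrt (1 + 4 / (α k) ^ 2))) :
    ∀ k : ℕ, k ≥ 1 → 2 / ((1 + (k : ℝ) ^ (-(1 : ℝ) / 2)) * (k : ℝ) + 1) < α k ∧ α k ≤ 2 / ((k : ℝ) + 1) := by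
  intro k hk
  obtain ⟨hlow, hup⟩ := bounds_of_step (fun k ↦ 2 / α k) (by norm_num [h1])
    (fun k hk ↦ by simp only [hrec k hk, two_div_succ_eq_step]) k hk
  have hk0 : (0 : ℝ) < k := by exact_mod_cast hk
  have hβ0 : 0 < 2 / α k := by linarith
  rw [one_add_rpow_neg_half_mul_add_one hk0, ← div_div_cancel₀ (two_ne_zero' ℝ) (b := α k)]
  exact ⟨div_lt_div_of_pos_left two_pos hβ0 hup,
    div_le_div_of_nonneg_left zero_le_two (by linarith) hlow⟩
end

section
/- Define the damping sequence (α_k)_{k≥1} of real numbers by α_1 = 1 and α_{k+1} = 2/(1 + √(1 + 4/α_k²)) for all k ≥ 1. Let a > 0 and 0 < b < 1 be real numbers satisfying (1) a·2^{−b} > √5 − 2 and (2) a(1−b)·2^{2−b} − ab(1−b)·2^{−b} − 1 ≥ 0. Then for all k ≥ 2, α_k ≥ 2/√((1 + a·k^{−b})k·[(1 + a·k^{−b})k + 2]). -/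
/-!
Write `dampingStep u = 2 / (1 + √(1 + 4 / u²))` for the recursion and
`dampingBound B = 2 / √(B (B + 2))` for the claimed bound at `B = B_k = (1 + a k^(-b)) k`.
Since `dampingStep (dampingBound B) = 2 / (B + 2)` and `dampingStep` is increasing,
`α_k ≥ dampingBound B_k` implies `α_(k+1) ≥ dampingBound B_(k+1)` as soon as
`(B_k + 2)² + 1 ≤ (B_(k+1) + 1)²`, i.e. `(B_(k+1) - B_k - 1)(B_(k+1) + B_k + 3) ≥ 1`.
As `B_k = k + a k^(1-b)`, concavity of `t ↦ t^(1-b)` bounds the first factor below by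
`a (1-b) (k+1)^(-b)`, the second is at least `2 (k+1)`, and condition (2) makes the product
at least `1`. The induction starts from `α_1 = 1 = dampingBound (√5 - 1)`, and condition (1)
makes the step from `√5 - 1` to `B_2` work.
-/

open Real

noncomputable def dampingStep (u : ℝ) : ℝ := 2 / (1 + √(1 + 4 / u ^ 2))

noncomputable def dampingBound (B : ℝ) : ℝ := 2 / √(B * (B + 2))

lemma dampingStep_le_dampingStep {u v : ℝ} (hu : 0 < u) (huv : u ≤ v) :
    dampingStep u ≤ dampingStep v := by
  unfold dampingStep
  gcongr

lemma dampingBound_pos {B : ℝ} (hB : 0 < B) : 0 < dampingBound B := by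
  unfold dampingBound
  positivity

lemma dampingStep_dampingBound {B : ℝ} (hB : 0 < B) :
    dampingStep (dampingBound B) = 2 / (B + 2) := by
  have hD : 0 < B * (B + 2) := by positivity
  have h : 1 + 4 / dampingBound B ^ 2 = (B + 1) ^ 2 := by
    rw [dampingBound, div_pow, sq_sqrt hD.le]
    field_simp
    ring
  rw [dampingStep, h, sqrt_sq (by positivity)]
  ring_nf

lemma dampingBound_le_two_div {B C : ℝ} (hB : 0 ≤ B) (hBC : (B + 2) ^ 2 + 1 ≤ (C + 1) ^ 2) :
    dampingBound C ≤ 2 / (B + 2) := by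
  have h : B + 2 ≤ √(C * (C + 2)) := by
    rw [← sqrt_sq (by positivity : 0 ≤ B + 2)]
    exact sqrt_le_sqrt (by nlinarith)
  exact div_le_div_of_nonneg_left zero_le_two (by positivity) h

lemma dampingBound_le_dampingStep {B C u : ℝ} (hB : 0 < B)
    (hBC : (B + 2) ^ 2 + 1 ≤ (C + 1) ^ 2) (hu : dampingBound B ≤ u) :
    dampingBound C ≤ dampingStep u :=
  calc dampingBound C ≤ 2 / (B + 2) := dampingBound_le_two_div hB.le hBC
    _ = dampingStep (dampingBound B) := (dampingStep_dampingBound hB).symm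
    _ ≤ dampingStep u := dampingStep_le_dampingStep (dampingBound_pos hB) hu

lemma mul_rpow_sub_one_le_add_one_rpow_sub_rpow {p x : ℝ} (hx : 0 ≤ x) (hp0 : 0 ≤ p)
    (hp1 : p ≤ 1) :
    p * (x + 1) ^ (p - 1) ≤ (x + 1) ^ p - x ^ p := by
  have hx1 : 0 < x + 1 := by linarith
  have hbern : (x / (x + 1)) ^ p ≤ 1 + p * (x / (x + 1) - 1) := by
    simpa using rpow_one_add_le_one_add_mul_self
      (by linarith [div_nonneg hx hx1.le] : (-1 : ℝ) ≤ x / (x + 1) - 1) hp0 hp1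
  have hsplit : x ^ p = (x + 1) ^ p * (x / (x + 1)) ^ p := by
    rw [← mul_rpow hx1.le (by positivity), mul_div_cancel₀ _ hx1.ne']
  have ht : x / (x + 1) - 1 = -(1 / (x + 1)) := by field_simp; ring
  rw [ht] at hbern
  have := mul_le_mul_of_nonneg_left hbern (rpow_nonneg hx1.le p)
  have e : (x + 1) ^ p * (1 + p * -(1 / (x + 1))) =
      (x + 1) ^ p - p * ((x + 1) ^ p / (x + 1)) := by
    ring
  rw [hsplit, rpow_sub_one hx1.ne']
  linarith

lemma dampingBound_two_le_dampingStep_one {a b : ℝ} (h : a * 2 ^ (-b) > √5 - 2) :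
    dampingBound ((1 + a * 2 ^ (-b)) * 2) ≤ dampingStep 1 := by
  have h5 : √5 ^ 2 = 5 := sq_sqrt (by norm_num)
  have hs : 2 < √5 := (lt_sqrt zero_le_two).2 (by norm_num)
  have hinit : dampingBound (√5 - 1) = 1 := by
    rw [dampingBound, show (√5 - 1) * (√5 - 1 + 2) = 2 ^ 2 by nlinarith, sqrt_sq zero_le_two]
    norm_num
  exact dampingBound_le_dampingStep (by linarith) (by nlinarith) hinit.le

lemma one_add_mul_rpow_neg_mul {a b x : ℝ} (hx : 0 < x) :
    (1 + a * x ^ (-b)) * x = x + a * x ^ (1 - b) := by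
  rw [sub_eq_add_neg, rpow_add hx, rpow_one]
  ring

lemma add_two_sq_add_one_le_succ_add_one_sq {a b x : ℝ} (ha : 0 ≤ a) (hb0 : 0 ≤ b)
    (hb1 : b ≤ 1) (hab : 1 ≤ a * (1 - b) * 2 ^ (2 - b)) (hx : 1 ≤ x) :
    (x + a * x ^ (1 - b) + 2) ^ 2 + 1 ≤ (x + 1 + a * (x + 1) ^ (1 - b) + 1) ^ 2 := by
  set B := x + a * x ^ (1 - b)
  set C := x + 1 + a * (x + 1) ^ (1 - b)
  have hx1 : 0 < x + 1 := by linarith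
  have hinc : a * ((1 - b) * (x + 1) ^ (-b)) ≤ C - B - 1 := by
    have := mul_le_mul_of_nonneg_left (mul_rpow_sub_one_le_add_one_rpow_sub_rpow
      (by linarith : 0 ≤ x) (by linarith : 0 ≤ 1 - b) (by linarith)) ha
    rw [show 1 - b - 1 = -b by ring] at this
    linarith
  have hsum : 2 * (x + 1) ≤ C + B + 3 := by
    have : 0 ≤ a * (x + 1) ^ (1 - b) := by positivity
    have : 0 ≤ a * x ^ (1 - b) := by positivity
    linarith
  have hlow : 1 ≤ a * ((1 - b) * (x + 1) ^ (-b)) * (2 * (x + 1)) :=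
    calc 1 ≤ a * (1 - b) * 2 ^ (2 - b) := hab
      _ = 2 * a * (1 - b) * 2 ^ (1 - b) := by
        rw [show 2 - b = 1 + (1 - b) by ring, rpow_add two_pos, rpow_one]
        ring
      _ ≤ 2 * a * (1 - b) * (x + 1) ^ (1 - b) := by
        have : 0 ≤ 1 - b := by linarith
        gcongr
        linarith
      _ = a * ((1 - b) * (x + 1) ^ (-b)) * (2 * (x + 1)) := by
        rw [sub_eq_add_neg 1 b, rpow_add hx1, rpow_one]
        ring
  have hinc0 : 0 ≤ C - B - 1 := (by positivity : 0 ≤ a * ((1 - b) * (x + 1) ^ (-b))).trans hinc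
  have hprod := mul_le_mul hinc hsum (by positivity) hinc0
  nlinarith

theorem stmt_3 (α : ℕ → ℝ)
    (h1 : α 1 = 1)
    (hrec : ∀ k ≥ 1, α (k + 1) = 2 / (1 + Real.sqrt (1 + 4 / (α k) ^ 2)))
    (a b : ℝ) (ha : 0 < a) (hb0 : 0 < b) (hb1 : b < 1)
    (hcond1 : a * (2 : ℝ) ^ (-b) > Real.sqrt 5 - 2)
    (hcond2 : a * (1 - b) * (2 : ℝ) ^ (2 - b) - a * b * (1 - b) * (2 : ℝ) ^ (-b) - 1 ≥ 0) :
    ∀ k ≥ 2, α k ≥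
      2 / Real.sqrt ((1 + a * (k : ℝ) ^ (-b)) * (k : ℝ) *
        ((1 + a * (k : ℝ) ^ (-b)) * (k : ℝ) + 2)) := by
  have hab : 1 ≤ a * (1 - b) * 2 ^ (2 - b) := by
    have : 0 ≤ a * b * (1 - b) * (2 : ℝ) ^ (-b) :=
      mul_nonneg (mul_nonneg (by positivity) (by linarith)) (by positivity)
    linarith
  have hstep : ∀ n : ℕ, 1 ≤ n → ((1 + a * (n : ℝ) ^ (-b)) * n + 2) ^ 2 + 1 ≤
      ((1 + a * ((n + 1 : ℕ) : ℝ) ^ (-b)) * (n + 1 : ℕ) + 1) ^ 2 := by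
    intro n hn
    have hn' : (1 : ℝ) ≤ n := by exact_mod_cast hn
    push_cast
    rw [one_add_mul_rpow_neg_mul (by linarith), one_add_mul_rpow_neg_mul (by linarith)]
    exact add_two_sq_add_one_le_succ_add_one_sq ha.le hb0.le hb1.le hab hn'
  intro k hk
  induction k, hk using Nat.le_induction with
  | base =>
    show dampingBound ((1 + a * ((2 : ℕ) : ℝ) ^ (-b)) * ((2 : ℕ) : ℝ)) ≤ α (1 + 1)
    rw [hrec 1 le_rfl, h1, Nat.cast_ofNat]
    exact dampingBound_two_le_dampingStep_one hcond1
  | succ n hn ih =>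
    have hn' : (0 : ℝ) < n := by exact_mod_cast (by omega : 0 < n)
    rw [hrec n (by omega)]
    exact dampingBound_le_dampingStep (by positivity) (hstep n (by omega)) ih
end

section
/- Let a > 0, 0 < b < 1, and let t ≥ 1 be a real number such that 2a(1−b)t^{1−b} − ab(1−b)t^{−b} − 1 ≥ 0. Then (1 + a(t+1)^{−b})(t+1)·[(1 + a(t+1)^{−b})(t+1) + 2] ≥ [(1 + a·t^{−b})t + 2]². -/
/-!
Write `x = t^(-b)`, `y = (t+1)^(-b)`, `G = (1 + a x) t`, `H = (1 + a y)(t + 1)` and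
`E = a (1 - b) y`; the claim is `(G + 2)² ≤ H (H + 2)`. Concavity of `s ↦ s^(1-b)` gives
`H ≥ G + 1 + E`, which reduces the claim to `2 E (G + 2) ≥ 1`. The hypothesis reads
`a (1 - b) x (2t - b) ≥ 1`, and Bernoulli's inequality gives `t y ≥ (t - b) x`; together they turn
`2 E (G + 2) ≥ 1` into a polynomial inequality in `t` and `b`.
-/

namespace Real

theorem rpow_le_rpow_add_mul_rpow_sub_one_mul_sub {p s u : ℝ} (hp0 : 0 ≤ p) (hp1 : p ≤ 1)
    (hs : 0 < s) (hu : 0 ≤ u) : u ^ p ≤ s ^ p + p * s ^ (p - 1) * (u - s) := by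
  have h := rpow_one_add_le_one_add_mul_self (s := (u - s) / s)
    (by rw [le_div_iff₀ hs]; linarith) hp0 hp1
  rw [show 1 + (u - s) / s = u / s by field_simp; ring, div_rpow hu hs.le,
    div_le_iff₀ (rpow_pos_of_pos hs p)] at h
  calc u ^ p ≤ (1 + p * ((u - s) / s)) * s ^ p := h
    _ = _ := by rw [rpow_sub_one hs.ne']; field_simp

theorem one_sub_mul_rpow_neg_le_sub {t b : ℝ} (ht : 0 < t) (hb0 : 0 ≤ b) (hb1 : b ≤ 1) :
    (1 - b) * (t + 1) ^ (-b) ≤ (t + 1) * (t + 1) ^ (-b) - t * t ^ (-b) := by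
  have h := rpow_le_rpow_add_mul_rpow_sub_one_mul_sub (by linarith : 0 ≤ 1 - b) (by linarith)
    (by linarith : 0 < t + 1) ht.le
  rw [show 1 - b - 1 = -b by ring, show 1 - b = -b + 1 by ring, rpow_add_one ht.ne',
    rpow_add_one (by linarith : t + 1 ≠ 0)] at h
  linarith

theorem sub_mul_rpow_neg_le_mul_add_one_rpow_neg {t b : ℝ} (ht : 0 < t) (hb0 : 0 ≤ b)
    (hb1 : b ≤ 1) : (t - b) * t ^ (-b) ≤ t * (t + 1) ^ (-b) := by
  have h := rpow_le_rpow_add_mul_rpow_sub_one_mul_sub hb0 hb1 ht (by linarith : 0 ≤ t + 1)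
  rw [rpow_sub_one ht.ne', add_sub_cancel_left, mul_one] at h
  have hX := rpow_pos_of_pos ht b
  have hY := rpow_pos_of_pos (by linarith : 0 < t + 1) b
  rw [rpow_neg ht.le, rpow_neg (by linarith), ← div_eq_mul_inv, ← div_eq_mul_inv,
    div_le_div_iff₀ hX hY]
  have h' : t * (t + 1) ^ b ≤ (t + b) * t ^ b :=
    calc t * (t + 1) ^ b ≤ t * (t ^ b + b * (t ^ b / t)) := by gcongr
      _ = (t + b) * t ^ b := by field_simp
  rcases le_total b t with hbt | htb
  · refine le_of_mul_le_mul_left ?_ ht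
    nlinarith [mul_le_mul_of_nonneg_left h' (sub_nonneg.2 hbt), mul_nonneg (sq_nonneg b) hX.le]
  · nlinarith

end Real

section OrderedField

variable {α : Type*} [Field α] [LinearOrder α] [IsStrictOrderedRing α]

theorem mul_one_sub_le_of_one_le_mul_two_mul_sub {t b K : α} (ht : 1 ≤ t) (hb : b ≤ 1)
    (hK : 1 ≤ K * (2 * t - b)) :
    t * (1 - b) ≤ 2 * K * (t - b) * ((1 - b) * (t + 2) + K * t) := by
  have hP : t * (1 - b) * (2 * t - b) ^ 2 ≤
      2 * (t - b) * ((1 - b) * (t + 2) * (2 * t - b) + t) := by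
    -- after `t = 1 + s`, `b = 1 - c` every coefficient is positive
    obtain ⟨s, hs, rfl⟩ : ∃ s, 0 ≤ s ∧ t = 1 + s := ⟨t - 1, by linarith, by ring⟩
    obtain ⟨c, hc, rfl⟩ : ∃ c, 0 ≤ c ∧ b = 1 - c := ⟨1 - b, by linarith, by ring⟩
    rw [← sub_nonneg]
    convert (by positivity : (0 : α) ≤ c * (5 * c ^ 2 + 4 * c + 1)
      + (c ^ 3 + 14 * c ^ 2 + 3 * c + 2) * s + (2 * c * (3 + c) + 2) * s ^ 2) using 1
    ring
  have htb : 0 ≤ t - b := by linarith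
  have hu : 0 < 2 * t - b := by linarith
  have hs := sub_nonneg.2 hK
  refine le_of_mul_le_mul_right ?_ (pow_pos hu 2)
  nlinarith [mul_nonneg hs (mul_nonneg htb (mul_nonneg (mul_nonneg (sub_nonneg.2 hb)
      (by linarith : (0 : α) ≤ t + 2)) hu.le)),
    mul_nonneg hs (mul_nonneg htb (by linarith : (0 : α) ≤ t)),
    mul_nonneg (mul_nonneg hs hs) (mul_nonneg htb (by linarith : (0 : α) ≤ t))]

theorem one_le_two_mul_mul_add_two {a b t x y : α} (ha : 0 < a) (hb : b < 1) (ht : 1 ≤ t)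
    (hx : 0 < x) (hK : 1 ≤ a * (1 - b) * x * (2 * t - b)) (hxy : (t - b) * x ≤ t * y) :
    1 ≤ 2 * (a * (1 - b) * y) * ((1 + a * x) * t + 2) := by
  have h1b : 0 < 1 - b := by linarith
  have hP := mul_one_sub_le_of_one_le_mul_two_mul_sub ht hb.le hK
  refine le_of_mul_le_mul_left ?_ (by positivity : 0 < t * (1 - b))
  calc t * (1 - b) * 1
      ≤ 2 * (a * (1 - b) * x) * (t - b) * ((1 - b) * (t + 2) + a * (1 - b) * x * t) := by
        simpa using hP
    _ = 2 * a * (1 - b) ^ 2 * ((1 + a * x) * t + 2) * ((t - b) * x) := by ring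
    _ ≤ 2 * a * (1 - b) ^ 2 * ((1 + a * x) * t + 2) * (t * y) := by gcongr
    _ = t * (1 - b) * (2 * (a * (1 - b) * y) * ((1 + a * x) * t + 2)) := by ring

theorem sq_add_two_le_mul_add_two {G E H : α} (hG : 0 ≤ G) (hE : 0 ≤ E) (hH : G + 1 + E ≤ H)
    (hGE : 1 ≤ 2 * E * (G + 2)) : (G + 2) ^ 2 ≤ H * (H + 2) := by
  nlinarith

end OrderedField

theorem stmt_4 (a b t : ℝ) (ha : 0 < a) (hb0 : 0 < b) (hb1 : b < 1) (ht : 1 ≤ t)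
    (h : 2 * a * (1 - b) * t ^ (1 - b) - a * b * (1 - b) * t ^ (-b) - 1 ≥ 0) :
    (1 + a * (t + 1) ^ (-b)) * (t + 1) * ((1 + a * (t + 1) ^ (-b)) * (t + 1) + 2) ≥
      ((1 + a * t ^ (-b)) * t + 2) ^ 2 := by
  have ht0 : 0 < t := by linarith
  have hx := Real.rpow_pos_of_pos ht0 (-b)
  rw [show 1 - b = -b + 1 by ring, Real.rpow_add_one ht0.ne'] at h
  have hK : 1 ≤ a * (1 - b) * t ^ (-b) * (2 * t - b) := by linear_combination h
  have hincr := mul_le_mul_of_nonneg_left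
    (Real.one_sub_mul_rpow_neg_le_sub ht0 hb0.le hb1.le) ha.le
  have hE := one_le_two_mul_mul_add_two ha hb1 ht hx hK
    (Real.sub_mul_rpow_neg_le_mul_add_one_rpow_neg ht0 hb0.le hb1.le)
  have h1b := sub_pos.2 hb1
  refine sq_add_two_le_mul_add_two (by positivity) (by positivity) ?_ hE
  linarith
end

section
/- Let (α_k)_{k≥1} be real numbers with 0 < α_k < 1 and α_k ≤ 2/(k+1) for all k ≥ 2, and define Γ_1 = 1 and Γ_k = (1 − α_k)Γ_{k−1} for k ≥ 2. Then for every N ≥ 1, Σ_{k=1}^N Γ_N/Γ_k ≥ (N + 2)/3. -/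
/-!
Since `α (n + 1) ≤ 2 / (n + 2)`, the weighted sequence `k (k + 1) Γ k` is nondecreasing,
so `Γ N / Γ k ≥ k (k + 1) / (N (N + 1))` for `1 ≤ k ≤ N`. Summing over `k` and using
`∑_{k=1}^N k (k + 1) = N (N + 1) (N + 2) / 3` gives the bound.
-/

open Finset

theorem sum_Icc_one_mul_succ (N : ℕ) :
    ∑ k ∈ Icc 1 N, (k : ℝ) * (k + 1) = N * (N + 1) * (N + 2) / 3 := by
  induction N with
  | zero => simp
  | succ n ih =>
    rw [sum_Icc_succ_top (by omega), ih]
    push_cast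
    ring

section Recurrence

variable {α Γ : ℕ → ℝ}

theorem pos_of_recurrence (hαlt : ∀ k ≥ 2, α k < 1) (hΓ1 : 0 < Γ 1)
    (hΓ : ∀ k ≥ 2, Γ k = (1 - α k) * Γ (k - 1)) : ∀ k ≥ 1, 0 < Γ k := by
  intro k hk
  induction k, hk using Nat.le_induction with
  | base => exact hΓ1
  | succ n hn ih =>
    rw [hΓ (n + 1) (by omega), Nat.add_sub_cancel]
    exact mul_pos (sub_pos.mpr (hαlt (n + 1) (by omega))) ih

theorem weighted_monotoneOn_of_recurrence (hαlt : ∀ k ≥ 2, α k < 1)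
    (hαle : ∀ k ≥ 2, α k ≤ 2 / ((k : ℝ) + 1)) (hΓ1 : 0 < Γ 1)
    (hΓ : ∀ k ≥ 2, Γ k = (1 - α k) * Γ (k - 1)) :
    MonotoneOn (fun k : ℕ ↦ k * (k + 1) * Γ k) (Set.Ici 1) := by
  refine monotoneOn_nat_Ici_of_le_succ fun n hn ↦ ?_
  have hΓn : 0 ≤ Γ n := (pos_of_recurrence hαlt hΓ1 hΓ n hn).le
  have hα : α (n + 1) * (n + 2) ≤ 2 := by
    have := hαle (n + 1) (by omega)
    push_cast at this
    rwa [le_div_iff₀ (by positivity), add_assoc, one_add_one_eq_two] at this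
  rw [hΓ (n + 1) (by omega), Nat.add_sub_cancel]
  push_cast
  -- the difference of the two sides is `Γ n * (n + 1) * (2 - α (n + 1) * (n + 2))`
  nlinarith [mul_nonneg (mul_nonneg hΓn n.cast_add_one_pos.le) (sub_nonneg.mpr hα)]

end Recurrence

theorem stmt_10_general (α Γ : ℕ → ℝ)
    (hαlt : ∀ k ≥ 2, α k < 1)
    (hαle : ∀ k ≥ 2, α k ≤ 2 / ((k : ℝ) + 1))
    (hΓ1 : Γ 1 = 1) (hΓ : ∀ k ≥ 2, Γ k = (1 - α k) * Γ (k - 1)) :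
    ∀ N ≥ 1, ∑ k ∈ Finset.Icc 1 N, Γ N / Γ k ≥ ((N : ℝ) + 2) / 3 := by
  intro N hN
  have hΓ1pos : 0 < Γ 1 := hΓ1 ▸ one_pos
  have hNpos : (0 : ℝ) < N * (N + 1) := by positivity
  have hterm : ∀ k ∈ Icc 1 N, (k : ℝ) * (k + 1) / (N * (N + 1)) ≤ Γ N / Γ k := by
    intro k hk
    obtain ⟨hk1, hkN⟩ := mem_Icc.mp hk
    rw [div_le_div_iff₀ hNpos (pos_of_recurrence hαlt hΓ1pos hΓ k hk1), mul_comm (Γ N)]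
    exact weighted_monotoneOn_of_recurrence hαlt hαle hΓ1pos hΓ hk1 (le_trans hk1 hkN) hkN
  calc ((N : ℝ) + 2) / 3 = (∑ k ∈ Icc 1 N, (k : ℝ) * (k + 1)) / (N * (N + 1)) := by
        rw [sum_Icc_one_mul_succ]; field_simp
    _ = ∑ k ∈ Icc 1 N, (k : ℝ) * (k + 1) / (N * (N + 1)) := sum_div ..
    _ ≤ ∑ k ∈ Icc 1 N, Γ N / Γ k := sum_le_sum hterm

theorem stmt_10 (α Γ : ℕ → ℝ)
    (hαpos : ∀ k ≥ 2, 0 < α k) (hαlt : ∀ k ≥ 2, α k < 1)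
    (hαle : ∀ k ≥ 2, α k ≤ 2 / ((k : ℝ) + 1))
    (hΓ1 : Γ 1 = 1) (hΓ : ∀ k ≥ 2, Γ k = (1 - α k) * Γ (k - 1)) :
    ∀ N ≥ 1, ∑ k ∈ Finset.Icc 1 N, Γ N / Γ k ≥ ((N : ℝ) + 2) / 3 :=
  stmt_10_general α Γ hαlt hαle hΓ1 hΓ
end

section
/- Let N ≥ 1 and let (α_k)_{k≥1} be real numbers with α_1 = 1, 0 < α_k < 1 for k ≥ 2, and α_{k+1} ≤ 2/(1 + √(1 + 4/α_k²)) for all k ≥ 1; define Γ_1 = 1 and Γ_k = (1 − α_k)Γ_{k−1} for k ≥ 2. Then 0 < (Γ_N·Σ_{k=1}^N 1/Γ_k)^{−1} ≤ (1/N)·Π_{k=2}^N (1 − α_k)^{−k/N}. -/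
/-!
Put `z_k = Γ_k / Γ_N`, so that `(Γ_N ∑ 1/Γ_k)⁻¹ = (∑ 1/z_k)⁻¹`. By HM-GM this is at
most `(1/N) (∏ z_k)^{1/N}`, and telescoping the recursion `Γ_k = (1 - α_k) Γ_{k-1}`
gives `∏_{k=1}^N z_k = ∏_{j=2}^N (1 - α_j)^{-(j-1)}`. Since `0 < 1 - α_j ≤ 1`, raising
the exponent `(j - 1)/N` to `j/N` only increases each factor.
-/

open Finset

theorem Real.inv_sum_inv_le_inv_card_mul_geomMean {ι : Type*} (s : Finset ι) (hs : s.Nonempty)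
    (x : ι → ℝ) (hx : ∀ i ∈ s, 0 < x i) :
    (∑ i ∈ s, (x i)⁻¹)⁻¹ ≤ (1 / #s) * (∏ i ∈ s, x i) ^ (1 / (#s : ℝ)) := by
  have hcard : (0 : ℝ) < #s := by exact_mod_cast hs.card_pos
  have hHM := Real.harm_mean_le_geom_mean_weighted s (fun _ ↦ 1 / (#s : ℝ)) x hs
    (fun _ _ ↦ by positivity) (by simp [hcard.ne']) hx
  rw [Real.finsetProd_rpow s x (fun i hi ↦ (hx i hi).le)] at hHM
  calc (∑ i ∈ s, (x i)⁻¹)⁻¹ = (1 / #s) * (∑ i ∈ s, 1 / (#s : ℝ) / x i)⁻¹ := by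
        simp_rw [div_div, one_div, mul_inv, ← mul_sum, mul_inv, inv_inv, ← mul_assoc,
          inv_mul_cancel₀ hcard.ne', one_mul]
    _ ≤ (1 / #s) * (∏ i ∈ s, x i) ^ (1 / (#s : ℝ)) := by gcongr

section Recursion

variable {Γ c : ℕ → ℝ}

theorem pos_of_eq_mul_pred (hΓ1 : 0 < Γ 1) (hc : ∀ k ≥ 2, 0 < c k)
    (hΓ : ∀ k ≥ 2, Γ k = c k * Γ (k - 1)) : ∀ k ≥ 1, 0 < Γ k := by
  intro k hk
  induction k, hk using Nat.le_induction with
  | base => exact hΓ1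
  | succ k hk ih =>
    rw [hΓ (k + 1) (by omega), Nat.add_sub_cancel]
    exact mul_pos (hc _ (by omega)) ih

theorem prod_div_eq_prod_inv_pow_of_eq_mul_pred (hΓ0 : ∀ k ≥ 1, Γ k ≠ 0)
    (hΓ : ∀ k ≥ 2, Γ k = c k * Γ (k - 1)) {N : ℕ} (hN : 1 ≤ N) :
    ∏ k ∈ Icc 1 N, Γ k / Γ N = ∏ j ∈ Icc 2 N, (c j)⁻¹ ^ (j - 1) := by
  induction N, hN using Nat.le_induction with
  | base => simp [hΓ0 1 le_rfl]
  | succ N hN ih =>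
    have hstep : ∀ k, Γ k / Γ (N + 1) = Γ k / Γ N * (c (N + 1))⁻¹ := fun k ↦ by
      rw [hΓ (N + 1) (by omega), Nat.add_sub_cancel]; ring
    rw [prod_Icc_succ_top (by omega), prod_Icc_succ_top (by omega), div_self (hΓ0 _ (by omega)),
      mul_one, Nat.add_sub_cancel]
    simp_rw [hstep, prod_mul_distrib, ih, prod_const, Nat.card_Icc, Nat.add_sub_cancel]

end Recursion

theorem Real.inv_pow_pred_rpow_le {c : ℝ} (hc0 : 0 < c) (hc1 : c ≤ 1) (j N : ℕ) :
    (c⁻¹ ^ (j - 1)) ^ (1 / (N : ℝ)) ≤ c ^ (-(j : ℝ) / N) := by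
  rw [inv_pow, ← Real.rpow_natCast, ← Real.rpow_neg hc0.le, ← Real.rpow_mul hc0.le]
  refine Real.rpow_le_rpow_of_exponent_ge hc0 hc1 ?_
  have hj : ((j - 1 : ℕ) : ℝ) ≤ j := by exact_mod_cast Nat.sub_le j 1
  rw [neg_mul, mul_one_div, neg_div]
  gcongr

theorem stmt_19_general (α Γ : ℕ → ℝ) (N : ℕ) (hN : 1 ≤ N)
    (hαpos : ∀ k ≥ 2, 0 < α k) (hαlt : ∀ k ≥ 2, α k < 1)
    (hΓ1 : Γ 1 = 1) (hΓ : ∀ k ≥ 2, Γ k = (1 - α k) * Γ (k - 1)) :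
    0 < (Γ N * ∑ k ∈ Finset.Icc 1 N, (Γ k)⁻¹)⁻¹ ∧
    (Γ N * ∑ k ∈ Finset.Icc 1 N, (Γ k)⁻¹)⁻¹ ≤
      (1 / (N : ℝ)) * ∏ k ∈ Finset.Icc 2 N, (1 - α k) ^ (-(k : ℝ) / (N : ℝ)) := by
  have hc0 : ∀ k ≥ 2, 0 < 1 - α k := fun k hk ↦ sub_pos.mpr (hαlt k hk)
  have hc1 : ∀ k ≥ 2, 1 - α k ≤ 1 := fun k hk ↦ by linarith [hαpos k hk]
  have hΓpos := pos_of_eq_mul_pred (hΓ1 ▸ one_pos) hc0 hΓ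
  have hne : (Icc 1 N).Nonempty := nonempty_Icc.mpr hN
  have hz : ∀ k ∈ Icc 1 N, 0 < Γ k / Γ N :=
    fun k hk ↦ div_pos (hΓpos k (mem_Icc.mp hk).1) (hΓpos N hN)
  refine ⟨inv_pos.mpr (mul_pos (hΓpos N hN)
    (sum_pos (fun k hk ↦ inv_pos.mpr (hΓpos k (mem_Icc.mp hk).1)) hne)), ?_⟩
  calc (Γ N * ∑ k ∈ Icc 1 N, (Γ k)⁻¹)⁻¹
        = (∑ k ∈ Icc 1 N, (Γ k / Γ N)⁻¹)⁻¹ := by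
        simp_rw [mul_sum, inv_div, div_eq_mul_inv]
    _ ≤ 1 / N * (∏ k ∈ Icc 1 N, Γ k / Γ N) ^ (1 / (N : ℝ)) := by
        simpa using Real.inv_sum_inv_le_inv_card_mul_geomMean _ hne _ hz
    _ = 1 / N * ∏ j ∈ Icc 2 N, ((1 - α j)⁻¹ ^ (j - 1)) ^ (1 / (N : ℝ)) := by
        rw [prod_div_eq_prod_inv_pow_of_eq_mul_pred (fun k hk ↦ (hΓpos k hk).ne') hΓ hN,
          Real.finsetProd_rpow]
        exact fun j hj ↦ by have := hc0 j (mem_Icc.mp hj).1; positivity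
    _ ≤ 1 / N * ∏ j ∈ Icc 2 N, (1 - α j) ^ (-(j : ℝ) / N) := by
        gcongr with j hj
        · exact fun j hj ↦ by have := hc0 j (mem_Icc.mp hj).1; positivity
        · exact Real.inv_pow_pred_rpow_le (hc0 j (mem_Icc.mp hj).1) (hc1 j (mem_Icc.mp hj).1) j N

theorem stmt_19 (α Γ : ℕ → ℝ) (N : ℕ) (hN : 1 ≤ N)
    (hα1 : α 1 = 1)
    (hαpos : ∀ k ≥ 2, 0 < α k) (hαlt : ∀ k ≥ 2, α k < 1)
    (hrec : ∀ k ≥ 1, α (k + 1) ≤ 2 / (1 + Real.sqrt (1 + 4 / (α k) ^ 2)))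
    (hΓ1 : Γ 1 = 1) (hΓ : ∀ k ≥ 2, Γ k = (1 - α k) * Γ (k - 1)) :
    0 < (Γ N * ∑ k ∈ Finset.Icc 1 N, (Γ k)⁻¹)⁻¹ ∧
    (Γ N * ∑ k ∈ Finset.Icc 1 N, (Γ k)⁻¹)⁻¹ ≤
      (1 / (N : ℝ)) * ∏ k ∈ Finset.Icc 2 N, (1 - α k) ^ (-(k : ℝ) / (N : ℝ)) :=
  stmt_19_general α Γ N hN hαpos hαlt hΓ1 hΓ
end
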